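/- Let the potential KdV flows be given by Q₂ = 3u₁² + u₁₁₁ and Q₃ = 10u₁³ + 5u₁₁² + 10u₁u₁₁₁ + u₁₁₁₁₁. The corresponding prolonged evolutionary vector fields 𝔇₂ = pr(Q₂∂_u) and 𝔇₃ = pr(Q₃∂_u) commute: [𝔇₂, 𝔇₃] = 0. Equivalently, 𝔇₂Q₃ = 𝔇₃Q₂ as functions of (u₁, u₁₁, u₁₁₁, ...). -/

import Mathlib

noncomputable section

/-- The second potential KdV flow `Q₂ = 3u₁² + u₁₁₁`, evaluated on the jet of a
one-variable function `f` (jet variables `u_{1^α}` correspond to `iteratedDeriv α f`). -/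
def Q2 (f : ℝ → ℝ) : ℝ → ℝ := fun x => 3 * (iteratedDeriv 1 f x)^2 + iteratedDeriv 3 f x

/-- The third potential KdV flow `Q₃ = 10u₁³ + 5u₁₁² + 10u₁u₁₁₁ + u₁₁₁₁₁`, evaluated
on the jet of `f`. -/
def Q3 (f : ℝ → ℝ) : ℝ → ℝ := fun x =>
  10 * (iteratedDeriv 1 f x)^3 + 5 * (iteratedDeriv 2 f x)^2
    + 10 * iteratedDeriv 1 f x * iteratedDeriv 3 f x + iteratedDeriv 5 f x

private lemma hasDerivAt_of_eq {f : ℝ → ℝ} {d d' : ℝ} {x : ℝ}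
    (h : HasDerivAt f d x) (h' : d = d') : HasDerivAt f d' x := h' ▸ h

/-- The prolonged evolutionary vector fields `𝔇₂ = pr(Q₂∂ᵤ)` and `𝔇₃ = pr(Q₃∂ᵤ)` commute:
`𝔇₂Q₃ = 𝔇₃Q₂` as an algebraic identity in the jet variables `u₁, u₁₁, u₁₁₁, …`
(equivalently, evaluated on the jet of an arbitrary smooth function `f`).
Here `𝔇₂Q₃ = (D₁Q₂)∂Q₃/∂u₁ + (D₁²Q₂)∂Q₃/∂u₁₁ + (D₁³Q₂)∂Q₃/∂u₁₁₁ + (D₁⁵Q₂)∂Q₃/∂u₁₁₁₁₁`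
and `𝔇₃Q₂ = (D₁Q₃)∂Q₂/∂u₁ + (D₁³Q₃)∂Q₂/∂u₁₁₁`. -/
theorem stmt6 (f : ℝ → ℝ) (hf : ContDiff ℝ (⊤ : ℕ∞) f) :
    ∀ x : ℝ,
      iteratedDeriv 1 (Q2 f) x * (30 * (iteratedDeriv 1 f x)^2 + 10 * iteratedDeriv 3 f x)
      + iteratedDeriv 2 (Q2 f) x * (10 * iteratedDeriv 2 f x)
      + iteratedDeriv 3 (Q2 f) x * (10 * iteratedDeriv 1 f x)
      + iteratedDeriv 5 (Q2 f) x
      = iteratedDeriv 1 (Q3 f) x * (6 * iteratedDeriv 1 f x)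
        + iteratedDeriv 3 (Q3 f) x := by
  have key : ∀ (n : ℕ) (x : ℝ), HasDerivAt (iteratedDeriv n f) (iteratedDeriv (n+1) f x) x := by
    intro n x
    have h : DifferentiableAt ℝ (iteratedDeriv n f) x :=
      (hf.differentiable_iteratedDeriv n (by exact_mod_cast ENat.coe_lt_top n)).differentiableAt
    rw [iteratedDeriv_succ]
    exact h.hasDerivAt
  -- chain for Q2
  have d1 : ∀ x, HasDerivAt (Q2 f)
      (6 * iteratedDeriv 1 f x * iteratedDeriv 2 f x + iteratedDeriv 4 f x) x := fun x =>
    hasDerivAt_of_eq ((((key 1 x).pow 2).const_mul (3:ℝ)).add (key 3 x)) (by norm_num; ring)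
  have d2 : ∀ x, HasDerivAt
      (fun y => 6 * iteratedDeriv 1 f y * iteratedDeriv 2 f y + iteratedDeriv 4 f y)
      (6 * (iteratedDeriv 2 f x)^2 + 6 * iteratedDeriv 1 f x * iteratedDeriv 3 f x
        + iteratedDeriv 5 f x) x := fun x =>
    hasDerivAt_of_eq ((((key 1 x).const_mul (6:ℝ)).mul (key 2 x)).add (key 4 x))
      (by norm_num; ring)
  have d3 : ∀ x, HasDerivAt
      (fun y => 6 * (iteratedDeriv 2 f y)^2 + 6 * iteratedDeriv 1 f y * iteratedDeriv 3 f y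
        + iteratedDeriv 5 f y)
      (18 * iteratedDeriv 2 f x * iteratedDeriv 3 f x + 6 * iteratedDeriv 1 f x *
        iteratedDeriv 4 f x + iteratedDeriv 6 f x) x := fun x =>
    hasDerivAt_of_eq (((((key 2 x).pow 2).const_mul (6:ℝ)).add
      (((key 1 x).const_mul (6:ℝ)).mul (key 3 x))).add (key 5 x)) (by norm_num; ring)
  have d4 : ∀ x, HasDerivAt
      (fun y => 18 * iteratedDeriv 2 f y * iteratedDeriv 3 f y + 6 * iteratedDeriv 1 f y *
        iteratedDeriv 4 f y + iteratedDeriv 6 f y)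
      (18 * (iteratedDeriv 3 f x)^2 + 24 * iteratedDeriv 2 f x * iteratedDeriv 4 f x
        + 6 * iteratedDeriv 1 f x * iteratedDeriv 5 f x + iteratedDeriv 7 f x) x := fun x =>
    hasDerivAt_of_eq (((((key 2 x).const_mul (18:ℝ)).mul (key 3 x)).add
      (((key 1 x).const_mul (6:ℝ)).mul (key 4 x))).add (key 6 x)) (by norm_num; ring)
  have d5 : ∀ x, HasDerivAt
      (fun y => 18 * (iteratedDeriv 3 f y)^2 + 24 * iteratedDeriv 2 f y * iteratedDeriv 4 f y
        + 6 * iteratedDeriv 1 f y * iteratedDeriv 5 f y + iteratedDeriv 7 f y)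
      (60 * iteratedDeriv 3 f x * iteratedDeriv 4 f x + 30 * iteratedDeriv 2 f x *
        iteratedDeriv 5 f x + 6 * iteratedDeriv 1 f x * iteratedDeriv 6 f x
        + iteratedDeriv 8 f x) x := fun x =>
    hasDerivAt_of_eq ((((((key 3 x).pow 2).const_mul (18:ℝ)).add
      (((key 2 x).const_mul (24:ℝ)).mul (key 4 x))).add
      (((key 1 x).const_mul (6:ℝ)).mul (key 5 x))).add (key 7 x)) (by norm_num; ring)
  -- chain for Q3
  have e1 : ∀ x, HasDerivAt (Q3 f)
      (30 * (iteratedDeriv 1 f x)^2 * iteratedDeriv 2 f x + 20 * iteratedDeriv 2 f x *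
        iteratedDeriv 3 f x + 10 * iteratedDeriv 1 f x * iteratedDeriv 4 f x
        + iteratedDeriv 6 f x) x := fun x =>
    hasDerivAt_of_eq (((((((key 1 x).pow 3).const_mul (10:ℝ)).add
      (((key 2 x).pow 2).const_mul (5:ℝ))).add
      (((key 1 x).const_mul (10:ℝ)).mul (key 3 x))).add (key 5 x))) (by norm_num; ring)
  have e2 : ∀ x, HasDerivAt
      (fun y => 30 * (iteratedDeriv 1 f y)^2 * iteratedDeriv 2 f y + 20 * iteratedDeriv 2 f y *
        iteratedDeriv 3 f y + 10 * iteratedDeriv 1 f y * iteratedDeriv 4 f y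
        + iteratedDeriv 6 f y)
      (60 * iteratedDeriv 1 f x * (iteratedDeriv 2 f x)^2 + 30 * (iteratedDeriv 1 f x)^2 *
        iteratedDeriv 3 f x + 20 * (iteratedDeriv 3 f x)^2 + 30 * iteratedDeriv 2 f x *
        iteratedDeriv 4 f x + 10 * iteratedDeriv 1 f x * iteratedDeriv 5 f x
        + iteratedDeriv 7 f x) x := fun x =>
    hasDerivAt_of_eq ((((((((key 1 x).pow 2).const_mul (30:ℝ)).mul (key 2 x)).add
      (((key 2 x).const_mul (20:ℝ)).mul (key 3 x))).add
      (((key 1 x).const_mul (10:ℝ)).mul (key 4 x))).add (key 6 x))) (by norm_num; ring)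
  have e3 : ∀ x, HasDerivAt
      (fun y => 60 * iteratedDeriv 1 f y * (iteratedDeriv 2 f y)^2 + 30 * (iteratedDeriv 1 f y)^2 *
        iteratedDeriv 3 f y + 20 * (iteratedDeriv 3 f y)^2 + 30 * iteratedDeriv 2 f y *
        iteratedDeriv 4 f y + 10 * iteratedDeriv 1 f y * iteratedDeriv 5 f y
        + iteratedDeriv 7 f y)
      (60 * (iteratedDeriv 2 f x)^3 + 180 * iteratedDeriv 1 f x * iteratedDeriv 2 f x *
        iteratedDeriv 3 f x + 30 * (iteratedDeriv 1 f x)^2 * iteratedDeriv 4 f x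
        + 70 * iteratedDeriv 3 f x * iteratedDeriv 4 f x + 40 * iteratedDeriv 2 f x *
        iteratedDeriv 5 f x + 10 * iteratedDeriv 1 f x * iteratedDeriv 6 f x
        + iteratedDeriv 8 f x) x := fun x =>
    hasDerivAt_of_eq ((((((((key 1 x).const_mul (60:ℝ)).mul ((key 2 x).pow 2)).add
      ((((key 1 x).pow 2).const_mul (30:ℝ)).mul (key 3 x))).add
      (((key 3 x).pow 2).const_mul (20:ℝ))).add
      (((key 2 x).const_mul (30:ℝ)).mul (key 4 x))).add
      (((key 1 x).const_mul (10:ℝ)).mul (key 5 x))).add (key 7 x)) (by norm_num; ring)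
  -- assemble iterated derivatives
  have A1 : iteratedDeriv 1 (Q2 f) = fun y =>
      6 * iteratedDeriv 1 f y * iteratedDeriv 2 f y + iteratedDeriv 4 f y := by
    rw [iteratedDeriv_one]; exact funext fun x => (d1 x).deriv
  have A2 : iteratedDeriv 2 (Q2 f) = fun y =>
      6 * (iteratedDeriv 2 f y)^2 + 6 * iteratedDeriv 1 f y * iteratedDeriv 3 f y
        + iteratedDeriv 5 f y := by
    have s : iteratedDeriv 2 (Q2 f) = deriv (iteratedDeriv 1 (Q2 f)) := iteratedDeriv_succ
    rw [s, A1]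
    exact funext fun x => (d2 x).deriv
  have A3 : iteratedDeriv 3 (Q2 f) = fun y =>
      18 * iteratedDeriv 2 f y * iteratedDeriv 3 f y + 6 * iteratedDeriv 1 f y *
        iteratedDeriv 4 f y + iteratedDeriv 6 f y := by
    have s : iteratedDeriv 3 (Q2 f) = deriv (iteratedDeriv 2 (Q2 f)) := iteratedDeriv_succ
    rw [s, A2]
    exact funext fun x => (d3 x).deriv
  have A4 : iteratedDeriv 4 (Q2 f) = fun y =>
      18 * (iteratedDeriv 3 f y)^2 + 24 * iteratedDeriv 2 f y * iteratedDeriv 4 f y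
        + 6 * iteratedDeriv 1 f y * iteratedDeriv 5 f y + iteratedDeriv 7 f y := by
    have s : iteratedDeriv 4 (Q2 f) = deriv (iteratedDeriv 3 (Q2 f)) := iteratedDeriv_succ
    rw [s, A3]
    exact funext fun x => (d4 x).deriv
  have A5 : iteratedDeriv 5 (Q2 f) = fun y =>
      60 * iteratedDeriv 3 f y * iteratedDeriv 4 f y + 30 * iteratedDeriv 2 f y *
        iteratedDeriv 5 f y + 6 * iteratedDeriv 1 f y * iteratedDeriv 6 f y
        + iteratedDeriv 8 f y := by
    have s : iteratedDeriv 5 (Q2 f) = deriv (iteratedDeriv 4 (Q2 f)) := iteratedDeriv_succ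
    rw [s, A4]
    exact funext fun x => (d5 x).deriv
  have B1 : iteratedDeriv 1 (Q3 f) = fun y =>
      30 * (iteratedDeriv 1 f y)^2 * iteratedDeriv 2 f y + 20 * iteratedDeriv 2 f y *
        iteratedDeriv 3 f y + 10 * iteratedDeriv 1 f y * iteratedDeriv 4 f y
        + iteratedDeriv 6 f y := by
    rw [iteratedDeriv_one]; exact funext fun x => (e1 x).deriv
  have B2 : iteratedDeriv 2 (Q3 f) = fun y =>
      60 * iteratedDeriv 1 f y * (iteratedDeriv 2 f y)^2 + 30 * (iteratedDeriv 1 f y)^2 *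
        iteratedDeriv 3 f y + 20 * (iteratedDeriv 3 f y)^2 + 30 * iteratedDeriv 2 f y *
        iteratedDeriv 4 f y + 10 * iteratedDeriv 1 f y * iteratedDeriv 5 f y
        + iteratedDeriv 7 f y := by
    have s : iteratedDeriv 2 (Q3 f) = deriv (iteratedDeriv 1 (Q3 f)) := iteratedDeriv_succ
    rw [s, B1]
    exact funext fun x => (e2 x).deriv
  have B3 : iteratedDeriv 3 (Q3 f) = fun y =>
      60 * (iteratedDeriv 2 f y)^3 + 180 * iteratedDeriv 1 f y * iteratedDeriv 2 f y *
        iteratedDeriv 3 f y + 30 * (iteratedDeriv 1 f y)^2 * iteratedDeriv 4 f y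
        + 70 * iteratedDeriv 3 f y * iteratedDeriv 4 f y + 40 * iteratedDeriv 2 f y *
        iteratedDeriv 5 f y + 10 * iteratedDeriv 1 f y * iteratedDeriv 6 f y
        + iteratedDeriv 8 f y := by
    have s : iteratedDeriv 3 (Q3 f) = deriv (iteratedDeriv 2 (Q3 f)) := iteratedDeriv_succ
    rw [s, B2]
    exact funext fun x => (e3 x).deriv
  intro x
  simp only [A1, A2, A3, A5, B1, B3]
  ring
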